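/- Let p, q be k-times differentiable functions with q(x) ≠ 0. Then the k-th derivative of p/q at x equals ((−1)^k / q(x)^{k+1}) times the determinant of the (k+1)×(k+1) matrix W whose first column has entries p^{(l−1)}(x) for 1 ≤ l ≤ k+1, and whose (i,j)-entry for 2 ≤ j ≤ k+1 is C(i−1, j−2) q^{(i−j+1)}(x) when i ≥ j−1 and 0 otherwise. -/

import Mathlib

/-!
Write `c m` for the `m`-th derivative of `p / q` at `x`. Leibniz's rule applied to `p = (p / q) * q`
says that the lower triangular matrix `L i m = (i choose m) q^{(i-m)}(x)`, whose determinant is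
`q(x)^(k+1)`, sends the vector `c` to the vector of derivatives of `p`. Cramer's rule recovers `c k`
as the determinant of `L` with its last column replaced by the derivatives of `p`, divided by
`q(x)^(k+1)`; rotating that column to the front gives the matrix of the theorem and the sign
`(-1)^k`.
-/

open Finset Matrix

namespace Matrix

variable {R : Type*} [CommRing R]

theorem det_updateCol_mulVec {n : Type*} [Fintype n] [DecidableEq n] (A : Matrix n n R)
    (v : n → R) (i : n) : (A.updateCol i (A *ᵥ v)).det = v i * A.det := by
  rw [← cramer_apply, cramer_eq_adjugate_mulVec, mulVec_mulVec, adjugate_mul, smul_mulVec,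
    one_mulVec, Pi.smul_apply, smul_eq_mul, mul_comm]

theorem det_submatrix_cycleRange_last_symm {k : ℕ} (M : Matrix (Fin (k + 1)) (Fin (k + 1)) R) :
    (M.submatrix id (Fin.last k).cycleRange.symm).det = (-1) ^ k * M.det := by
  simp [det_permute']

end Matrix

section Leibniz

variable {𝕜 : Type*} [NontriviallyNormedField 𝕜]

theorem iteratedDeriv_eq_sum_choose_mul_iteratedDeriv_div {p q : 𝕜 → 𝕜} {x : 𝕜} {n : ℕ}
    (hp : ContDiffAt 𝕜 n p x) (hq : ContDiffAt 𝕜 n q x) (hqx : q x ≠ 0) :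
    iteratedDeriv n p x = ∑ m ∈ range (n + 1),
      n.choose m * iteratedDeriv m (fun y => p y / q y) x * iteratedDeriv (n - m) q x := by
  have hpq : p =ᶠ[nhds x] fun y => p y / q y * q y := by
    filter_upwards [hq.continuousAt.eventually_ne hqx] with y hy
    exact (div_mul_cancel₀ (p y) hy).symm
  rw [hpq.iteratedDeriv_eq]
  exact iteratedDeriv_fun_mul (f := fun y => p y / q y) (hp.div hq hqx) hq

noncomputable def leibnizMatrix (q : 𝕜 → 𝕜) (x : 𝕜) (k : ℕ) :
    Matrix (Fin (k + 1)) (Fin (k + 1)) 𝕜 :=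
  of fun i m => ((i : ℕ).choose m : 𝕜) * iteratedDeriv ((i : ℕ) - m) q x

theorem leibnizMatrix_isLowerTriangular (q : 𝕜 → 𝕜) (x : 𝕜) (k : ℕ) :
    (leibnizMatrix q x k).IsLowerTriangular := fun i m him => by
  simp [leibnizMatrix, Nat.choose_eq_zero_of_lt (show (i : ℕ) < m from him)]

theorem det_leibnizMatrix (q : 𝕜 → 𝕜) (x : 𝕜) (k : ℕ) :
    (leibnizMatrix q x k).det = q x ^ (k + 1) := by
  rw [det_of_isLowerTriangular _ (leibnizMatrix_isLowerTriangular q x k)]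
  simp [leibnizMatrix]

theorem leibnizMatrix_mulVec_iteratedDeriv_div {p q : 𝕜 → 𝕜} {x : 𝕜} {k : ℕ}
    (hp : ContDiffAt 𝕜 k p x) (hq : ContDiffAt 𝕜 k q x) (hqx : q x ≠ 0) :
    leibnizMatrix q x k *ᵥ (fun m : Fin (k + 1) => iteratedDeriv m (fun y => p y / q y) x) =
      fun i : Fin (k + 1) => iteratedDeriv i p x := by
  ext i
  have hik : (i : ℕ) ≤ k := Fin.is_le i
  rw [iteratedDeriv_eq_sum_choose_mul_iteratedDeriv_div (hp.of_le (by exact_mod_cast hik))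
    (hq.of_le (by exact_mod_cast hik)) hqx, mulVec, dotProduct]
  simp only [leibnizMatrix, of_apply]
  rw [Fin.sum_univ_eq_sum_range (fun m => ((i : ℕ).choose m : 𝕜) *
      iteratedDeriv ((i : ℕ) - m) q x * iteratedDeriv m (fun y => p y / q y) x), eq_comm]
  refine sum_subset (range_subset_range.mpr (by omega)) (fun m _ hm => ?_) |>.trans
    (sum_congr rfl fun m _ => by ring)
  simp [Nat.choose_eq_zero_of_lt (by simpa using hm : (i : ℕ) < m)]

theorem submatrix_cycleRange_symm_updateCol_leibnizMatrix (q : 𝕜 → 𝕜) (x : 𝕜) (k : ℕ)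
    (v : Fin (k + 1) → 𝕜) :
    ((leibnizMatrix q x k).updateCol (Fin.last k) v).submatrix id (Fin.last k).cycleRange.symm =
      of fun i j : Fin (k + 1) =>
        if (j : ℕ) = 0 then v i
        else if (j : ℕ) ≤ (i : ℕ) + 1 then
          ((i : ℕ).choose ((j : ℕ) - 1) : 𝕜) * iteratedDeriv ((i : ℕ) + 1 - (j : ℕ)) q x
        else 0 := by
  ext i j
  cases j using Fin.cases with
  | zero => simp only [of_apply, submatrix_apply, id, Fin.cycleRange_symm_zero, updateCol_self,
      Fin.val_zero, if_true]
  | succ j =>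
    rw [submatrix_apply, id, Fin.cycleRange_symm_succ, Fin.succAbove_last,
      updateCol_ne (Fin.castSucc_ne_last j)]
    by_cases hji : (j : ℕ) ≤ i
    · simp [leibnizMatrix, hji, Nat.add_sub_add_right]
    · simp [leibnizMatrix, hji, Nat.choose_eq_zero_of_lt (not_le.mp hji)]

end Leibniz

theorem iteratedDeriv_div_eq_det (k : ℕ) (p q : ℝ → ℝ)
    (hp : ContDiff ℝ k p) (hq : ContDiff ℝ k q) (x : ℝ) (hqx : q x ≠ 0) :
    iteratedDeriv k (fun y => p y / q y) x =
      (-1 : ℝ) ^ k / q x ^ (k + 1) *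
        (Matrix.of fun i j : Fin (k + 1) =>
          if (j : ℕ) = 0 then iteratedDeriv i p x
          else if (j : ℕ) ≤ (i : ℕ) + 1 then
            ((i : ℕ).choose ((j : ℕ) - 1) : ℝ) * iteratedDeriv ((i : ℕ) + 1 - (j : ℕ)) q x
          else 0).det := by
  rw [← submatrix_cycleRange_symm_updateCol_leibnizMatrix,
    ← leibnizMatrix_mulVec_iteratedDeriv_div hp.contDiffAt hq.contDiffAt hqx,
    det_submatrix_cycleRange_last_symm, det_updateCol_mulVec, det_leibnizMatrix, Fin.val_last]
  field_simp
  rw [← pow_mul, mul_comm k, pow_mul, neg_one_sq, one_pow, mul_one]
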